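/- arXiv:1801.06507 — 3 statements merged into one kernel-verified Lean document; each statement's English description precedes it below -/
import Mathlib

section
/- Suppose every fixed level value (the initial levels H_i(t_0) for 1 ≤ i ≤ N and the boundary levels H_1(t_j) for 1 ≤ j ≤ T) exceeds H_b, and let an assignment of the interior variables satisfy H_i(t_j) > H_b for all 2 ≤ i ≤ N and 1 ≤ j ≤ T. Then the gradients, taken with respect to the 2(N−1)T interior variables {H_i(t_j) : 2 ≤ i ≤ N, 1 ≤ j ≤ T} ∪ {Q_i(t_j) : 1 ≤ i ≤ N−1, 1 ≤ j ≤ T}, of the 2(N−1)T hydraulic residuals c_{i,j} (2 ≤ i ≤ N, 1 ≤ j ≤ T) and d_{i,j} (1 ≤ i ≤ N−1, 1 ≤ j ≤ T) are linearly independent; equivalently, they form a basis of ℝ^{2(N−1)T}. -/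
/-- Index type for the interior hydraulic variables of the staggered grid.
`Sum.inl (k, m)` is the interior level variable `H_{k+2}(t_{m+1})` (`2 ≤ k+2 ≤ N`),
`Sum.inr (k, m)` is the interior discharge variable `Q_{k+1}(t_{m+1})` (`1 ≤ k+1 ≤ N-1`). -/
abbrev HydIdx (N T : ℕ) : Type := (Fin (N - 1) × Fin T) ⊕ (Fin (N - 1) × Fin T)

/-- Smooth absolute value `⟨x⟩ = √(x² + ε)`. -/
noncomputable def sabs (ε x : ℝ) : ℝ := Real.sqrt (x ^ 2 + ε)

/-- Value of the level `H_i(t_j)` (`1 ≤ i ≤ N`, `0 ≤ j ≤ T`): the fixed initial value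
`H0 i` at `j = 0`, the fixed boundary value `Hbd j` at `i = 1`, and an interior optimization
variable otherwise. -/
noncomputable def Hval (N T : ℕ) (H0 Hbd : ℕ → ℝ) (x : HydIdx N T → ℝ) (i j : ℕ) : ℝ :=
  if j = 0 then H0 i
  else if i ≤ 1 then Hbd j
  else if h : i - 2 < N - 1 ∧ j - 1 < T then x (Sum.inl (⟨i - 2, h.1⟩, ⟨j - 1, h.2⟩)) else 0

/-- Value of the discharge `Q_i(t_j)` (`1 ≤ i ≤ N`, `0 ≤ j ≤ T`): the fixed initial value
`Q0 i` at `j = 0`, the given boundary value `QN j` at `i = N`, and an interior optimization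
variable otherwise. -/
noncomputable def Qval (N T : ℕ) (Q0 QN : ℕ → ℝ) (x : HydIdx N T → ℝ) (i j : ℕ) : ℝ :=
  if j = 0 then Q0 i
  else if N ≤ i then QN j
  else if h : i - 1 < N - 1 ∧ j - 1 < T then x (Sum.inr (⟨i - 1, h.1⟩, ⟨j - 1, h.2⟩)) else 0

/-- Cross section `A_{i+1/2}(t_j) = (w/2)(H_i(t_j) + H_{i+1}(t_j) - 2 H_b)`. -/
noncomputable def Aval (N T : ℕ) (H0 Hbd : ℕ → ℝ) (w Hb : ℝ)
    (x : HydIdx N T → ℝ) (i j : ℕ) : ℝ :=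
  w / 2 * (Hval N T H0 Hbd x i j + Hval N T H0 Hbd x (i + 1) j - 2 * Hb)

/-- Wetted perimeter `P_{i+1/2}(t_j) = w + H_i(t_j) + H_{i+1}(t_j) - 2 H_b`. -/
noncomputable def Pval (N T : ℕ) (H0 Hbd : ℕ → ℝ) (w Hb : ℝ)
    (x : HydIdx N T → ℝ) (i j : ℕ) : ℝ :=
  w + Hval N T H0 Hbd x i j + Hval N T H0 Hbd x (i + 1) j - 2 * Hb

/-- Mass-balance residual `c_{i,j}` (`2 ≤ i ≤ N`, `1 ≤ j ≤ T`). -/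
noncomputable def massRes (N T : ℕ) (H0 Hbd Q0 QN : ℕ → ℝ) (w Δx Δt : ℝ)
    (x : HydIdx N T → ℝ) (i j : ℕ) : ℝ :=
  (Qval N T Q0 QN x i j - Qval N T Q0 QN x (i - 1) j) / Δx
    + w * (Hval N T H0 Hbd x i j - Hval N T H0 Hbd x i (j - 1)) / Δt

/-- Momentum residual `d_{i,j}` (`1 ≤ i ≤ N-1`, `1 ≤ j ≤ T`). -/
noncomputable def momRes (N T : ℕ) (H0 Hbd Q0 QN : ℕ → ℝ)
    (g w Hb Δx Δt C ε Abar Pbar Qbar θ : ℝ) (x : HydIdx N T → ℝ) (i j : ℕ) : ℝ :=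
  (Qval N T Q0 QN x i j - Qval N T Q0 QN x i (j - 1)) / Δt
    + g * (θ * Aval N T H0 Hbd w Hb x i j + (1 - θ) * Abar)
        * (Hval N T H0 Hbd x (i + 1) j - Hval N T H0 Hbd x i j) / Δx
    + g * (θ * Pval N T H0 Hbd w Hb x i (j - 1) * sabs ε (Qval N T Q0 QN x i j)
            / Aval N T H0 Hbd w Hb x i (j - 1) ^ 2
          + (1 - θ) * Pbar * sabs ε Qbar / Abar ^ 2)
        * Qval N T Q0 QN x i j / C ^ 2

/-- The family of all `2(N-1)T` hydraulic residuals, as functions of the vector of interior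
variables: `Sum.inl (k, m) ↦ c_{k+2, m+1}` and `Sum.inr (k, m) ↦ d_{k+1, m+1}`. -/
noncomputable def hydRes (N T : ℕ) (H0 Hbd Q0 QN : ℕ → ℝ)
    (g w Hb Δx Δt C ε Abar Pbar Qbar θ : ℝ) (r : HydIdx N T) (x : HydIdx N T → ℝ) : ℝ :=
  match r with
  | Sum.inl (k, m) => massRes N T H0 Hbd Q0 QN w Δx Δt x ((k : ℕ) + 2) ((m : ℕ) + 1)
  | Sum.inr (k, m) =>
      momRes N T H0 Hbd Q0 QN g w Hb Δx Δt C ε Abar Pbar Qbar θ x ((k : ℕ) + 1) ((m : ℕ) + 1)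


/-!
The residuals at time `t_j` involve only the variables at `t_j` and `t_{j-1}`, so the Jacobian is
block lower triangular in time and it suffices to show that each diagonal block is injective.
On one time slice the linearised mass rows say `Q_{i-1} - Q_i = (w Δx / Δt) H_i`, and the
momentum rows say `γ_i Q_i + α_{i+1} H_{i+1} - α_i H_i = 0` with `γ_i > 0` and `α_k ≥ 0`
(`momDischargeCoef` and `momLevelCoef`; this is where `H > H_b` enters). Multiplying the
momentum rows by `Q_i`, summing by parts (the boundary terms vanish since `H_1` and `Q_N` are
not variables) and inserting the mass rows gives `∑ γ_i Q_i² + (w Δx / Δt) ∑ α_k H_k² = 0`.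
There are as many residuals as variables, so an injective Jacobian means the gradients form a
basis of the dual.
-/

theorem fderiv_apply_eq_of_add_smul {𝕜 E F : Type*} [NontriviallyNormedField 𝕜]
    [NormedAddCommGroup E] [NormedSpace 𝕜 E] [NormedAddCommGroup F] [NormedSpace 𝕜 F]
    {f : E → F} {x u : E} {d : F} (hf : DifferentiableAt 𝕜 f x)
    (hline : ∀ t : 𝕜, f (x + t • u) = f x + t • d) :
    fderiv 𝕜 f x u = d := by
  rw [← hf.lineDeriv_eq_fderiv]
  refine HasLineDerivAt.lineDeriv ?_
  simpa [HasLineDerivAt, hline] using ((hasDerivAt_id (0 : 𝕜)).smul_const d).const_add (f x)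

theorem linearIndependent_and_span_eq_top_of_forall_apply_eq_zero {ι E : Type*} [Fintype ι]
    [NormedAddCommGroup E] [NormedSpace ℝ E] [FiniteDimensional ℝ E]
    (hdim : Module.finrank ℝ E = Fintype.card ι) (f : ι → E →L[ℝ] ℝ)
    (hf : ∀ u, (∀ r, f r u = 0) → u = 0) :
    LinearIndependent ℝ f ∧ Submodule.span ℝ (Set.range f) = ⊤ := by
  classical
  let Φ : E →ₗ[ℝ] ι → ℝ := LinearMap.pi fun r => (f r : E →ₗ[ℝ] ℝ)
  have hΦ : Function.Surjective Φ := by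
    refine (LinearMap.injective_iff_surjective_of_finrank_eq_finrank (by simp [hdim])).1 ?_
    rw [← LinearMap.ker_eq_bot, LinearMap.ker_eq_bot']
    exact fun u hu => hf u fun r => congr_fun hu r
  have hind : LinearIndependent ℝ f := by
    refine Fintype.linearIndependent_iff.2 fun c hc r => ?_
    obtain ⟨u, hu⟩ := hΦ (Pi.single r 1)
    have hcu := congr_arg (fun L : E →L[ℝ] ℝ => L u) hc
    have hfu : ∀ s, f s u = (Pi.single r 1 : ι → ℝ) s := fun s => congr_fun hu s
    simpa [hfu, Pi.single_apply] using hcu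
  refine ⟨hind, hind.span_eq_top_of_card_eq_finrank' ?_⟩
  rw [← LinearMap.toContinuousLinearMap.finrank_eq, Subspace.dual_finrank_eq, hdim]

theorem staggered_system_eq_zero {n : ℕ} {q h γ α : ℕ → ℝ} {β : ℝ} (hβ : 0 < β)
    (hγ : ∀ i < n, 0 < γ i) (hα : ∀ i < n, 0 ≤ α (i + 1)) (hqn : q n = 0) (hh0 : h 0 = 0)
    (hmass : ∀ i < n, q i - q (i + 1) = β * h (i + 1))
    (hmom : ∀ i < n, γ i * q i + (α (i + 1) * h (i + 1) - α i * h i) = 0) :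
    ∀ i < n, q i = 0 ∧ h (i + 1) = 0 := by
  set φ : ℕ → ℝ := fun i => α i * h i
  have hparts : ∑ i ∈ Finset.range n, q i * (φ (i + 1) - φ i)
      = ∑ i ∈ Finset.range n, φ (i + 1) * (q i - q (i + 1)) := by
    have htel := Finset.sum_range_sub (fun i => q i * φ i) n
    simp only [hqn, hh0, φ, zero_mul, mul_zero, sub_zero] at htel
    rw [← sub_eq_zero, ← Finset.sum_sub_distrib, ← htel]
    exact Finset.sum_congr rfl fun i _ => by ring
  have henergy : ∑ i ∈ Finset.range n, (γ i * q i ^ 2 + β * α (i + 1) * h (i + 1) ^ 2) = 0 := by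
    calc ∑ i ∈ Finset.range n, (γ i * q i ^ 2 + β * α (i + 1) * h (i + 1) ^ 2)
        = ∑ i ∈ Finset.range n, (γ i * q i ^ 2 + φ (i + 1) * (q i - q (i + 1))) := by
          refine Finset.sum_congr rfl fun i hi => ?_
          rw [hmass i (Finset.mem_range.1 hi)]
          ring
      _ = ∑ i ∈ Finset.range n, q i * (γ i * q i + (φ (i + 1) - φ i)) := by
          rw [Finset.sum_add_distrib, ← hparts, ← Finset.sum_add_distrib]
          exact Finset.sum_congr rfl fun i _ => by ring
      _ = 0 := Finset.sum_eq_zero fun i hi => by rw [hmom i (Finset.mem_range.1 hi), mul_zero]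
  have hterm_nonneg : ∀ i ∈ Finset.range n,
      0 ≤ γ i * q i ^ 2 + β * α (i + 1) * h (i + 1) ^ 2 := fun i hi => by
    have := hγ i (Finset.mem_range.1 hi)
    have := hα i (Finset.mem_range.1 hi)
    positivity
  have hq : ∀ i < n, q i = 0 := fun i hi => by
    have hterm :=
      (Finset.sum_eq_zero_iff_of_nonneg hterm_nonneg).1 henergy i (Finset.mem_range.2 hi)
    have := hα i hi
    have : 0 ≤ β * α (i + 1) * h (i + 1) ^ 2 := by positivity
    have : γ i * q i ^ 2 = 0 := by linarith [mul_nonneg (hγ i hi).le (sq_nonneg (q i))]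
    simpa [(hγ i hi).ne'] using this
  intro i hi
  have hnext : q (i + 1) = 0 := by
    rcases Nat.lt_or_ge (i + 1) n with h' | h'
    · exact hq _ h'
    · rwa [show i + 1 = n by omega]
  refine ⟨hq i hi, ?_⟩
  have := hmass i hi
  rw [hq i hi, hnext, sub_zero] at this
  exact (mul_eq_zero.1 this.symm).resolve_left hβ.ne'

section Grid

variable {N T : ℕ}

@[fun_prop]
theorem differentiable_Hval (H0 Hbd : ℕ → ℝ) (i j : ℕ) :
    Differentiable ℝ fun y : HydIdx N T → ℝ => Hval N T H0 Hbd y i j := by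
  unfold Hval; split_ifs <;> fun_prop

@[fun_prop]
theorem differentiable_Qval (Q0 QN : ℕ → ℝ) (i j : ℕ) :
    Differentiable ℝ fun y : HydIdx N T → ℝ => Qval N T Q0 QN y i j := by
  unfold Qval; split_ifs <;> fun_prop

theorem Hval_add_smul (H0 Hbd : ℕ → ℝ) (x u : HydIdx N T → ℝ) (t : ℝ) (i j : ℕ) :
    Hval N T H0 Hbd (x + t • u) i j = Hval N T H0 Hbd x i j + t * Hval N T 0 0 u i j := by
  unfold Hval; split_ifs <;> simp

theorem Qval_add_smul (Q0 QN : ℕ → ℝ) (x u : HydIdx N T → ℝ) (t : ℝ) (i j : ℕ) :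
    Qval N T Q0 QN (x + t • u) i j = Qval N T Q0 QN x i j + t * Qval N T 0 0 u i j := by
  unfold Qval; split_ifs <;> simp

theorem Hval_inl (H0 Hbd : ℕ → ℝ) (y : HydIdx N T → ℝ) (k : Fin (N - 1)) (m : Fin T) :
    Hval N T H0 Hbd y (k + 2) (m + 1) = y (Sum.inl (k, m)) := by
  simp [Hval]

theorem Qval_inr (Q0 QN : ℕ → ℝ) (y : HydIdx N T → ℝ) (k : Fin (N - 1)) (m : Fin T) :
    Qval N T Q0 QN y (k + 1) (m + 1) = y (Sum.inr (k, m)) := by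
  have : ¬ N ≤ (k : ℕ) + 1 := by omega
  simp [Qval, this]

theorem Hval_zero_zero_of_slice {u : HydIdx N T → ℝ} {j : ℕ}
    (hu : ∀ p : Fin (N - 1) × Fin T, (p.2 : ℕ) + 1 = j → u (Sum.inl p) = 0) (i : ℕ) :
    Hval N T 0 0 u i j = 0 := by
  unfold Hval; split_ifs with h0 h1 h2
  · rfl
  · rfl
  · exact hu _ (by simp; omega)
  · rfl

theorem Qval_zero_zero_of_slice {u : HydIdx N T → ℝ} {j : ℕ}
    (hu : ∀ p : Fin (N - 1) × Fin T, (p.2 : ℕ) + 1 = j → u (Sum.inr p) = 0) (i : ℕ) :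
    Qval N T 0 0 u i j = 0 := by
  unfold Qval; split_ifs with h0 h1 h2
  · rfl
  · rfl
  · exact hu _ (by simp; omega)
  · rfl

theorem Hval_gt {H0 Hbd : ℕ → ℝ} {Hb : ℝ} {x : HydIdx N T → ℝ}
    (hH0 : ∀ i, 1 ≤ i → i ≤ N → Hb < H0 i) (hHbd : ∀ j, 1 ≤ j → j ≤ T → Hb < Hbd j)
    (hx : ∀ p : Fin (N - 1) × Fin T, Hb < x (Sum.inl p)) {i j : ℕ} (hi1 : 1 ≤ i) (hiN : i ≤ N)
    (hjT : j ≤ T) :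
    Hb < Hval N T H0 Hbd x i j := by
  unfold Hval; split_ifs with h0 h1 h2
  · exact hH0 i hi1 hiN
  · exact hHbd j (by omega) hjT
  · exact hx _
  · exact absurd ⟨by omega, by omega⟩ h2

end Grid

section Residuals

variable {N T : ℕ} (H0 Hbd Q0 QN : ℕ → ℝ) (g w Hb Δx Δt C ε Abar Pbar Qbar θ : ℝ)
  (x : HydIdx N T → ℝ)

noncomputable def momLevelCoef (k j : ℕ) : ℝ :=
  g * (θ * w * (Hval N T H0 Hbd x k j - Hb) + (1 - θ) * Abar) / Δx

noncomputable def momDischargeCoef (i j : ℕ) : ℝ :=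
  1 / Δt + g * (θ * Pval N T H0 Hbd w Hb x i (j - 1)
      * (Qval N T Q0 QN x i j ^ 2 / sabs ε (Qval N T Q0 QN x i j) + sabs ε (Qval N T Q0 QN x i j))
      / Aval N T H0 Hbd w Hb x i (j - 1) ^ 2 + (1 - θ) * Pbar * sabs ε Qbar / Abar ^ 2) / C ^ 2

theorem fderiv_massRes_apply (u : HydIdx N T → ℝ) (i j : ℕ) :
    fderiv ℝ (fun y => massRes N T H0 Hbd Q0 QN w Δx Δt y i j) x u
      = massRes N T 0 0 0 0 w Δx Δt u i j :=
  fderiv_apply_eq_of_add_smul (by unfold massRes; fun_prop) fun t => by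
    simp only [massRes, Hval_add_smul, Qval_add_smul, smul_eq_mul]
    ring

theorem differentiableAt_momRes {i j : ℕ} (hε : 0 < ε)
    (hA : Aval N T H0 Hbd w Hb x i (j - 1) ≠ 0) :
    DifferentiableAt ℝ
      (fun y => momRes N T H0 Hbd Q0 QN g w Hb Δx Δt C ε Abar Pbar Qbar θ y i j) x := by
  have hA2 : Aval N T H0 Hbd w Hb x i (j - 1) ^ 2 ≠ 0 := pow_ne_zero _ hA
  have hs : ∀ q : ℝ, q ^ 2 + ε ≠ 0 := fun q => by positivity
  simp only [momRes, sabs, Aval, Pval, div_eq_mul_inv]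
  fun_prop (disch := first | assumption | exact hs _)

theorem fderiv_momRes_apply {i j : ℕ} (hε : 0 < ε) (hA : Aval N T H0 Hbd w Hb x i (j - 1) ≠ 0)
    (u : HydIdx N T → ℝ) (hQprev : Qval N T 0 0 u i (j - 1) = 0)
    (hHprev : Hval N T 0 0 u i (j - 1) = 0) (hHprev' : Hval N T 0 0 u (i + 1) (j - 1) = 0) :
    fderiv ℝ (fun y => momRes N T H0 Hbd Q0 QN g w Hb Δx Δt C ε Abar Pbar Qbar θ y i j) x u
      = momDischargeCoef H0 Hbd Q0 QN g w Hb Δt C ε Abar Pbar Qbar θ x i j * Qval N T 0 0 u i j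
        + (momLevelCoef H0 Hbd g w Hb Δx Abar θ x (i + 1) j * Hval N T 0 0 u (i + 1) j
          - momLevelCoef H0 Hbd g w Hb Δx Abar θ x i j * Hval N T 0 0 u i j) := by
  rw [← (differentiableAt_momRes H0 Hbd Q0 QN g w Hb Δx Δt C ε Abar Pbar Qbar θ x hε
    hA).lineDeriv_eq_fderiv]
  refine HasLineDerivAt.lineDeriv ?_
  -- Along `x + t • u` the levels at `t_{j-1}` stay fixed, so the friction factor's `P` and `A`
  -- are constants and only the current-time quantities vary with `t`.
  have hlin : ∀ a b : ℝ, HasDerivAt (fun t : ℝ => a + t * b) b 0 := fun a b => by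
    simpa using ((hasDerivAt_id (0 : ℝ)).mul_const b).const_add a
  have hs : ∀ q : ℝ, q ^ 2 + ε ≠ 0 := fun q => by positivity
  unfold HasLineDerivAt
  simp only [momRes, Aval, Pval, sabs, Hval_add_smul, Qval_add_smul, hQprev, hHprev, hHprev',
    mul_zero, add_zero]
  have hQ := hlin (Qval N T Q0 QN x i j) (Qval N T 0 0 u i j)
  have hH := hlin (Hval N T H0 Hbd x i j) (Hval N T 0 0 u i j)
  have hH' := hlin (Hval N T H0 Hbd x (i + 1) j) (Hval N T 0 0 u (i + 1) j)
  have hS := ((hQ.pow 2).add_const ε).sqrt (hs _)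
  refine HasDerivAt.congr_deriv (HasDerivAt.fun_add (HasDerivAt.fun_add
    ((hQ.sub_const _).div_const Δt)
    (((((((hH.fun_add hH').sub_const _).const_mul _).const_mul θ).add_const _).const_mul g
      |>.fun_mul (hH'.fun_sub hH)).div_const Δx))
    (((((hS.const_mul _).div_const _).add_const _).const_mul g |>.fun_mul hQ).div_const _)) ?_
  have hsq : √(Qval N T Q0 QN x i j ^ 2 + ε) ≠ 0 := by positivity
  unfold momDischargeCoef momLevelCoef sabs Pval
  unfold Aval at hA ⊢
  simp only [Pi.pow_apply, zero_mul, add_zero]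
  field_simp
  ring

end Residuals

section Coefficients

variable {N T : ℕ} {H0 Hbd Q0 QN : ℕ → ℝ} {g w Hb Δx Δt C ε Abar Pbar Qbar θ : ℝ}
  {x : HydIdx N T → ℝ}

theorem Aval_pos {i j : ℕ} (hw : 0 < w) (hHi : Hb < Hval N T H0 Hbd x i j)
    (hHi' : Hb < Hval N T H0 Hbd x (i + 1) j) : 0 < Aval N T H0 Hbd w Hb x i j := by
  unfold Aval
  have : 0 < Hval N T H0 Hbd x i j + Hval N T H0 Hbd x (i + 1) j - 2 * Hb := by linarith
  positivity

theorem Pval_pos {i j : ℕ} (hw : 0 < w) (hHi : Hb < Hval N T H0 Hbd x i j)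
    (hHi' : Hb < Hval N T H0 Hbd x (i + 1) j) : 0 < Pval N T H0 Hbd w Hb x i j := by
  unfold Pval
  linarith

theorem momLevelCoef_nonneg {k j : ℕ} (hg : 0 ≤ g) (hw : 0 ≤ w) (hΔx : 0 ≤ Δx) (hAbar : 0 ≤ Abar)
    (hθ : θ ∈ Set.Icc (0 : ℝ) 1) (hH : Hb < Hval N T H0 Hbd x k j) :
    0 ≤ momLevelCoef H0 Hbd g w Hb Δx Abar θ x k j := by
  unfold momLevelCoef
  have := hθ.1
  have := sub_nonneg.2 hθ.2
  have := sub_nonneg.2 hH.le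
  positivity

theorem momDischargeCoef_pos {i j : ℕ} (hg : 0 ≤ g) (hΔt : 0 < Δt) (hPbar : 0 ≤ Pbar)
    (hθ : θ ∈ Set.Icc (0 : ℝ) 1) (hP : 0 ≤ Pval N T H0 Hbd w Hb x i (j - 1)) :
    0 < momDischargeCoef H0 Hbd Q0 QN g w Hb Δt C ε Abar Pbar Qbar θ x i j := by
  unfold momDischargeCoef sabs
  have := hθ.1
  have := sub_nonneg.2 hθ.2
  positivity

end Coefficients

section Jacobian

variable {N T : ℕ} {H0 Hbd Q0 QN : ℕ → ℝ} {g w Hb Δx Δt C ε Abar Pbar Qbar θ : ℝ}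
  {x : HydIdx N T → ℝ}

theorem slice_eq_zero_of_prev_eq_zero (hg : 0 < g) (hw : 0 < w) (hΔx : 0 < Δx) (hΔt : 0 < Δt)
    (hε : 0 < ε) (hAbar : 0 < Abar) (hPbar : 0 < Pbar) (hθ : θ ∈ Set.Icc (0 : ℝ) 1)
    (hlevel : ∀ i j, 1 ≤ i → i ≤ N → j ≤ T → Hb < Hval N T H0 Hbd x i j)
    {u : HydIdx N T → ℝ}
    (hu : ∀ r, fderiv ℝ (hydRes N T H0 Hbd Q0 QN g w Hb Δx Δt C ε Abar Pbar Qbar θ r) x u = 0)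
    (m : Fin T) (hprev : ∀ i, Hval N T 0 0 u i m = 0 ∧ Qval N T 0 0 u i m = 0) :
    ∀ k, u (Sum.inl (k, m)) = 0 ∧ u (Sum.inr (k, m)) = 0 := by
  -- `q i` and `h i` are `Q_{i+1}` and `H_{i+1}` at `t_{m+1}`; so `q (N - 1) = Q_N`, `h 0 = H_1`.
  have hstag := staggered_system_eq_zero (n := N - 1) (β := w * Δx / Δt)
    (q := fun i => Qval N T 0 0 u (i + 1) (m + 1)) (h := fun i => Hval N T 0 0 u (i + 1) (m + 1))
    (γ := fun i => momDischargeCoef H0 Hbd Q0 QN g w Hb Δt C ε Abar Pbar Qbar θ x (i + 1) (m + 1))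
    (α := fun i => momLevelCoef H0 Hbd g w Hb Δx Abar θ x (i + 1) (m + 1)) (by positivity)
    (fun i hi => momDischargeCoef_pos hg.le hΔt hPbar.le hθ
      (Pval_pos hw (hlevel _ _ (by omega) (by omega) m.2.le)
        (hlevel _ _ (by omega) (by omega) m.2.le)).le)
    (fun i hi => momLevelCoef_nonneg hg.le hw.le hΔx.le hAbar.le hθ
      (hlevel _ _ (by omega) (by omega) m.2))
    (by simp [Qval, show N ≤ N - 1 + 1 by omega])
    (by simp [Hval])
    (fun i hi => by
      have hmass := (fderiv_massRes_apply H0 Hbd Q0 QN w Δx Δt x u _ _).symm.trans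
        (hu (Sum.inl (⟨i, hi⟩, m)))
      simp only [massRes, (hprev _).1, Nat.add_sub_cancel, show i + 2 - 1 = i + 1 by omega,
        sub_zero] at hmass
      simp only [show i + 1 + 1 = i + 2 by omega]
      field_simp at hmass ⊢
      linarith)
    (fun i hi => (fderiv_momRes_apply H0 Hbd Q0 QN g w Hb Δx Δt C ε Abar Pbar Qbar θ x hε
      (Aval_pos hw (hlevel _ _ (by omega) (by omega) (by omega))
        (hlevel _ _ (by omega) (by omega) (by omega))).ne'
      u (by simpa using (hprev _).2) (by simpa using (hprev _).1)
      (by simpa using (hprev _).1)).symm.trans (hu (Sum.inr (⟨i, hi⟩, m))))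
  intro k
  obtain ⟨hq, hh⟩ := hstag k k.2
  exact ⟨by simpa [Hval_inl] using hh, by simpa [Qval_inr] using hq⟩

theorem eq_zero_of_forall_fderiv_hydRes_apply_eq_zero (hg : 0 < g) (hw : 0 < w) (hΔx : 0 < Δx)
    (hΔt : 0 < Δt) (hε : 0 < ε) (hAbar : 0 < Abar) (hPbar : 0 < Pbar)
    (hθ : θ ∈ Set.Icc (0 : ℝ) 1)
    (hlevel : ∀ i j, 1 ≤ i → i ≤ N → j ≤ T → Hb < Hval N T H0 Hbd x i j)
    {u : HydIdx N T → ℝ}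
    (hu : ∀ r, fderiv ℝ (hydRes N T H0 Hbd Q0 QN g w Hb Δx Δt C ε Abar Pbar Qbar θ r) x u = 0) :
    u = 0 := by
  have hslice : ∀ m (hm : m < T) k,
      u (Sum.inl (k, ⟨m, hm⟩)) = 0 ∧ u (Sum.inr (k, ⟨m, hm⟩)) = 0 := by
    intro m
    induction m using Nat.strong_induction_on with
    | _ m ih =>
      intro hm
      have hbefore : ∀ p : Fin (N - 1) × Fin T, (p.2 : ℕ) + 1 = m →
          u (Sum.inl p) = 0 ∧ u (Sum.inr p) = 0 :=
        fun p hp => ih p.2 (by omega) p.2.2 p.1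
      exact slice_eq_zero_of_prev_eq_zero hg hw hΔx hΔt hε hAbar hPbar hθ hlevel hu ⟨m, hm⟩
        fun i => ⟨Hval_zero_zero_of_slice (fun p hp => (hbefore p hp).1) i,
          Qval_zero_zero_of_slice (fun p hp => (hbefore p hp).2) i⟩
  funext r
  rcases r with ⟨k, m⟩ | ⟨k, m⟩
  · exact (hslice m m.2 k).1
  · exact (hslice m m.2 k).2

end Jacobian

theorem hydRes_gradients_linearIndependent_general
    (N T : ℕ)
    (g w Δx Δt C ε Abar Pbar : ℝ)
    (hg : 0 < g) (hw : 0 < w) (hΔx : 0 < Δx) (hΔt : 0 < Δt)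
    (hε : 0 < ε) (hAbar : 0 < Abar) (hPbar : 0 < Pbar)
    (Hb Qbar θ : ℝ) (hθ : θ ∈ Set.Icc (0 : ℝ) 1)
    (H0 Hbd Q0 QN : ℕ → ℝ)
    (hH0 : ∀ i, 1 ≤ i → i ≤ N → Hb < H0 i)
    (hHbd : ∀ j, 1 ≤ j → j ≤ T → Hb < Hbd j)
    (x : HydIdx N T → ℝ)
    (hx : ∀ p : Fin (N - 1) × Fin T, Hb < x (Sum.inl p)) :
    LinearIndependent ℝ
        (fun r : HydIdx N T =>
          fderiv ℝ (hydRes N T H0 Hbd Q0 QN g w Hb Δx Δt C ε Abar Pbar Qbar θ r) x)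
    ∧ Submodule.span ℝ
        (Set.range fun r : HydIdx N T =>
          fderiv ℝ (hydRes N T H0 Hbd Q0 QN g w Hb Δx Δt C ε Abar Pbar Qbar θ r) x) = ⊤ :=
  linearIndependent_and_span_eq_top_of_forall_apply_eq_zero (by simp) _ fun _ hu =>
    eq_zero_of_forall_fderiv_hydRes_apply_eq_zero hg hw hΔx hΔt hε hAbar hPbar hθ
      (fun _ _ hi1 hiN hjT => Hval_gt hH0 hHbd hx hi1 hiN hjT) hu

/-- If all fixed level values (initial levels `H_i(t_0)`, `1 ≤ i ≤ N`, and boundary levels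
`H_1(t_j)`, `1 ≤ j ≤ T`) exceed `H_b`, and the interior level variables satisfy
`H_i(t_j) > H_b`, then the gradients (with respect to the `2(N-1)T` interior variables) of the
`2(N-1)T` hydraulic residuals `c_{i,j}` and `d_{i,j}` are linearly independent; equivalently,
they form a basis of the (dual of the) `2(N-1)T`-dimensional variable space. -/
theorem hydRes_gradients_linearIndependent
    (N T : ℕ) (hN : 2 ≤ N) (hT : 1 ≤ T)
    (g w Δx Δt C ε Abar Pbar : ℝ)
    (hg : 0 < g) (hw : 0 < w) (hΔx : 0 < Δx) (hΔt : 0 < Δt) (hC : 0 < C)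
    (hε : 0 < ε) (hAbar : 0 < Abar) (hPbar : 0 < Pbar)
    (Hb Qbar θ : ℝ) (hθ : θ ∈ Set.Icc (0 : ℝ) 1)
    (H0 Hbd Q0 QN : ℕ → ℝ)
    (hH0 : ∀ i, 1 ≤ i → i ≤ N → Hb < H0 i)
    (hHbd : ∀ j, 1 ≤ j → j ≤ T → Hb < Hbd j)
    (x : HydIdx N T → ℝ)
    (hx : ∀ p : Fin (N - 1) × Fin T, Hb < x (Sum.inl p)) :
    LinearIndependent ℝ
        (fun r : HydIdx N T =>
          fderiv ℝ (hydRes N T H0 Hbd Q0 QN g w Hb Δx Δt C ε Abar Pbar Qbar θ r) x)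
    ∧ Submodule.span ℝ
        (Set.range fun r : HydIdx N T =>
          fderiv ℝ (hydRes N T H0 Hbd Q0 QN g w Hb Δx Δt C ε Abar Pbar Qbar θ r) x) = ⊤ :=
  hydRes_gradients_linearIndependent_general N T g w Δx Δt C ε Abar Pbar hg hw hΔx hΔt hε hAbar
    hPbar Hb Qbar θ hθ H0 Hbd Q0 QN hH0 hHbd x hx
end

section
/- Let N ≥ 2, let w, Δx, Δt be positive reals, and let ψ_2,…,ψ_N and τ_1,…,τ_{N−1} be positive reals. Consider the 2(N−1) × 2(N−1) real matrix whose rows are indexed by {d_i : 1 ≤ i ≤ N−1} ∪ {c_i : 2 ≤ i ≤ N} and whose columns are indexed by {Q_i : 1 ≤ i ≤ N−1} ∪ {H_i : 2 ≤ i ≤ N}, with the only nonzero entries being: in row c_i, the entry w/Δt in column H_i, the entry −1/Δx in column Q_{i−1}, and (when i ≤ N−1) the entry 1/Δx in column Q_i; in row d_i, the entry τ_i in column Q_i, (when i ≥ 2) the entry −ψ_i in column H_i, and the entry ψ_{i+1} in column H_{i+1}. Then this matrix is invertible. -/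
/-- The single-time-step block of the constraint Jacobian of the discretized inertial-wave
model.  Rows: `Sum.inl k` is the momentum row `d_{k+1}` (`1 ≤ k+1 ≤ N-1`), `Sum.inr k` is the
mass-balance row `c_{k+2}` (`2 ≤ k+2 ≤ N`).  Columns: `Sum.inl l` is the discharge variable
`Q_{l+1}`, `Sum.inr l` is the level variable `H_{l+2}`.
  * row `c_i`: entry `w/Δt` in column `H_i`, entry `-1/Δx` in column `Q_{i-1}`, and
    (when `i ≤ N-1`) entry `1/Δx` in column `Q_i`;
  * row `d_i`: entry `τ_i` in column `Q_i`, (when `i ≥ 2`) entry `-ψ_i` in column `H_i`,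
    and entry `ψ_{i+1}` in column `H_{i+1}`,
where `ψ` and `τ` are indexed here by `ψ l = ψ_{l+2}` and `τ k = τ_{k+1}`. -/
noncomputable def stepJacobian (N : ℕ) (w Δx Δt : ℝ) (ψ τ : Fin (N - 1) → ℝ) :
    Matrix (Fin (N - 1) ⊕ Fin (N - 1)) (Fin (N - 1) ⊕ Fin (N - 1)) ℝ :=
  Matrix.of fun r c =>
    match r, c with
    | Sum.inl k, Sum.inl l => if l = k then τ k else 0
    | Sum.inl k, Sum.inr l =>
        if l = k then ψ k else if (l : ℕ) + 1 = (k : ℕ) then -ψ l else 0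
    | Sum.inr k, Sum.inl l =>
        if l = k then -(1 / Δx) else if (l : ℕ) = (k : ℕ) + 1 then 1 / Δx else 0
    | Sum.inr k, Sum.inr l => if l = k then w / Δt else 0

/-- With `N ≥ 2`, positive `w, Δx, Δt` and positive `ψ_2,…,ψ_N`, `τ_1,…,τ_{N-1}`, the
single-time-step constraint Jacobian block is invertible. -/
theorem stepJacobian_invertible (N : ℕ) (hN : 2 ≤ N) (w Δx Δt : ℝ)
    (hw : 0 < w) (hΔx : 0 < Δx) (hΔt : 0 < Δt)
    (ψ τ : Fin (N - 1) → ℝ) (hψ : ∀ l, 0 < ψ l) (hτ : ∀ k, 0 < τ k) :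
    IsUnit (stepJacobian N w Δx Δt ψ τ) := by
  rw [Matrix.isUnit_iff_isUnit_det, isUnit_iff_ne_zero]
  intro hdet
  obtain ⟨v, hv, hMv⟩ := (Matrix.exists_mulVec_eq_zero_iff).2 hdet
  set c : ℝ := 1 / Δx with hcdef
  have hcpos : 0 < c := by positivity
  set q : Fin (N-1) → ℝ := fun k => v (Sum.inl k) with hq
  set h : Fin (N-1) → ℝ := fun k => v (Sum.inr k) with hh
  set B : Fin (N-1) → Fin (N-1) → ℝ :=
    fun k l => if l = k then ψ k else if (l:ℕ)+1 = (k:ℕ) then -ψ l else 0 with hB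
  set C : Fin (N-1) → Fin (N-1) → ℝ :=
    fun k l => if l = k then -c else if (l:ℕ) = (k:ℕ)+1 then c else 0 with hC
  have key : ∀ k l, ψ k * C k l = -c * B l k := by
    intro k l
    simp only [hB, hC]
    by_cases h1 : l = k
    · subst h1; simp; ring
    · have h1' : ¬ (k = l) := fun hkl => h1 hkl.symm
      by_cases h2 : (l:ℕ) = (k:ℕ) + 1
      · have h2'' : (k:ℕ)+1 = (l:ℕ) := h2.symm
        rw [if_neg h1, if_pos h2, if_neg h1', if_pos h2'']
        ring
      · have h2' : ¬ ((k:ℕ)+1 = (l:ℕ)) := fun hkl => h2 hkl.symm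
        rw [if_neg h1, if_neg h2, if_neg h1', if_neg h2']
        ring
  have e1 : ∀ k, τ k * q k + ∑ l, B k l * h l = 0 := by
    intro k
    have h0 := congrFun hMv (Sum.inl k)
    simp only [Matrix.mulVec, dotProduct, Fintype.sum_sum_type, stepJacobian,
      Matrix.of_apply, Pi.zero_apply] at h0
    rw [← h0]
    congr 1
    all_goals first | rfl | simp [hq, hh, hB, ite_mul]
  have e2 : ∀ k, (∑ l, C k l * q l) + (w/Δt) * h k = 0 := by
    intro k
    have h0 := congrFun hMv (Sum.inr k)
    simp only [Matrix.mulVec, dotProduct, Fintype.sum_sum_type, stepJacobian,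
      Matrix.of_apply, Pi.zero_apply] at h0
    rw [← h0]
    congr 1
    all_goals first | rfl | simp [hq, hh, hC, hcdef, ite_mul]
  set Sq : ℝ := ∑ k, τ k * (q k * q k) with hSq
  set Sh : ℝ := ∑ k, ψ k * (h k * h k) with hSh
  set X : ℝ := ∑ k, ∑ l, B k l * (h l * q k) with hX
  have hSqX : Sq + X = 0 := by
    have hz : ∑ k, q k * (τ k * q k + ∑ l, B k l * h l) = 0 := by
      simp only [fun k => e1 k, mul_zero, Finset.sum_const_zero]
    calc Sq + X = ∑ k, q k * (τ k * q k + ∑ l, B k l * h l) := by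
          rw [hSq, hX, ← Finset.sum_add_distrib]
          refine Finset.sum_congr rfl fun k _ => ?_
          rw [mul_add, Finset.mul_sum]
          congr 1
          · ring
          · exact Finset.sum_congr rfl fun l _ => by ring
      _ = 0 := hz
  have hcX : c * X = (w/Δt) * Sh := by
    have step : ∑ k, ψ k * h k * ((∑ l, C k l * q l) + (w/Δt) * h k) = 0 := by
      simp only [fun k => e2 k, mul_zero, Finset.sum_const_zero]
    have expand : ∑ k, ψ k * h k * (∑ l, C k l * q l) + (w/Δt) * Sh = 0 := by
      rw [← step, hSh, Finset.mul_sum, ← Finset.sum_add_distrib]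
      refine Finset.sum_congr rfl fun k _ => ?_
      ring
    have lhs_eq : ∑ k, ψ k * h k * (∑ l, C k l * q l) = -(c * X) := by
      have hterm : ∀ k, ψ k * h k * (∑ l, C k l * q l)
          = ∑ l, (-c) * (B l k * (h k * q l)) := by
        intro k
        rw [Finset.mul_sum]
        refine Finset.sum_congr rfl fun l _ => ?_
        calc ψ k * h k * (C k l * q l) = (ψ k * C k l) * (h k * q l) := by ring
          _ = (-c * B l k) * (h k * q l) := by rw [key k l]
          _ = (-c) * (B l k * (h k * q l)) := by ring
      rw [Finset.sum_congr rfl fun k _ => hterm k, Finset.sum_comm, hX, ← neg_mul,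
        Finset.mul_sum]
      exact Finset.sum_congr rfl fun k _ => by rw [Finset.mul_sum]
    linarith [expand, lhs_eq]
  have hShnn : 0 ≤ Sh := Finset.sum_nonneg fun k _ =>
    mul_nonneg (hψ k).le (mul_self_nonneg _)
  have hSqnn : 0 ≤ Sq := Finset.sum_nonneg fun k _ =>
    mul_nonneg (hτ k).le (mul_self_nonneg _)
  have hwt : (0:ℝ) < w / Δt := by positivity
  have hcX0 : 0 ≤ c * X := by rw [hcX]; exact mul_nonneg hwt.le hShnn
  have hXnn : 0 ≤ X := by nlinarith
  have hSq0 : Sq = 0 := by linarith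
  have hX0 : X = 0 := by linarith
  have hSh0 : Sh = 0 := by
    rw [hX0, mul_zero] at hcX
    exact ((mul_eq_zero.mp hcX.symm).resolve_left hwt.ne').symm ▸ rfl
  have hq0 : ∀ k, q k = 0 := by
    intro k
    have hk := (Finset.sum_eq_zero_iff_of_nonneg
      (fun k _ => mul_nonneg (hτ k).le (mul_self_nonneg _))).1 hSq0 k (Finset.mem_univ k)
    have hqq : q k * q k = 0 := (mul_eq_zero.mp hk).resolve_left (hτ k).ne'
    exact mul_self_eq_zero.mp hqq
  have hh0 : ∀ k, h k = 0 := by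
    intro k
    have hk := (Finset.sum_eq_zero_iff_of_nonneg
      (fun k _ => mul_nonneg (hψ k).le (mul_self_nonneg _))).1 hSh0 k (Finset.mem_univ k)
    have hhh : h k * h k = 0 := (mul_eq_zero.mp hk).resolve_left (hψ k).ne'
    exact mul_self_eq_zero.mp hhh
  apply hv
  funext j
  cases j with
  | inl k => exact hq0 k
  | inr k => exact hh0 k
end

section
/- Let n ≥ 1 and let M be an n×n real tridiagonal matrix, i.e., M_{k,l} = 0 whenever |k − l| > 1. Assume that all diagonal entries are positive, M_{k,k} > 0 for 1 ≤ k ≤ n, and that the products of paired off-diagonal entries are nonpositive, M_{k,k+1} · M_{k+1,k} ≤ 0 for 1 ≤ k ≤ n−1. Then det M > 0; in particular, M is invertible. -/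
open Matrix Finset


/-- A tridiagonal real matrix with positive diagonal entries and nonpositive products of
paired off-diagonal entries has positive determinant; in particular it is invertible. -/
theorem tridiagonal_det_pos (n : ℕ) (hn : 1 ≤ n) (M : Matrix (Fin n) (Fin n) ℝ)
    (htri : ∀ k l : Fin n, 1 < |(k : ℤ) - (l : ℤ)| → M k l = 0)
    (hdiag : ∀ k : Fin n, 0 < M k k)
    (hoff : ∀ k l : Fin n, (l : ℕ) = (k : ℕ) + 1 → M k l * M l k ≤ 0) :
    0 < M.det := by
  suffices h : ∀ k (hk : k ≤ n), 0 < (M.submatrix (Fin.castLE hk) (Fin.castLE hk)).det by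
    have := h n le_rfl
    have hid : Fin.castLE (le_refl n) = (id : Fin n → Fin n) := by
      funext x; exact Fin.ext rfl
    rwa [hid, Matrix.submatrix_id_id] at this
  intro k
  induction k using Nat.strong_induction_on with
  | _ k ih =>
    match k with
    | 0 =>
      intro hk
      rw [Matrix.det_fin_zero]
      norm_num
    | 1 =>
      intro hk
      rw [Matrix.det_fin_one]
      exact hdiag _
    | (k+2) =>
      intro hk
      have hk1 : k + 1 ≤ n := by omega
      have hk0 : k ≤ n := by omega
      set A : Matrix (Fin (k+2)) (Fin (k+2)) ℝ :=
        M.submatrix (Fin.castLE hk) (Fin.castLE hk) with hA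
      have hD1 : 0 < (M.submatrix (Fin.castLE hk1) (Fin.castLE hk1)).det :=
        ih (k+1) (by omega) hk1
      have hD0 : 0 < (M.submatrix (Fin.castLE hk0) (Fin.castLE hk0)).det :=
        ih k (by omega) hk0
      set j0 : Fin (k+2) := ⟨k, by omega⟩ with hj0
      set j1 : Fin (k+2) := Fin.last (k+1) with hj1
      have hne : j0 ≠ j1 := by
        simp [hj0, hj1, Fin.ext_iff, Fin.last]
      -- expand along the last row
      rw [Matrix.det_succ_row A j1]
      have hzero : ∀ j : Fin (k+2), j ∉ ({j0, j1} : Finset (Fin (k+2))) →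
          (-1 : ℝ) ^ ((j1 : ℕ) + (j : ℕ)) * A j1 j
            * (A.submatrix j1.succAbove j.succAbove).det = 0 := by
        intro j hj
        simp only [Finset.mem_insert, Finset.mem_singleton] at hj
        push_neg at hj
        have hjv : (j : ℕ) < k := by
          rcases hj with ⟨h1, h2⟩
          have : (j : ℕ) ≠ k := fun h => h1 (Fin.ext h)
          have : (j : ℕ) ≠ k + 1 := fun h => h2 (Fin.ext h)
          omega
        have : A j1 j = 0 := by
          apply htri
          simp only [hj1, Fin.coe_castLE, Fin.val_last]
          rw [abs_of_nonneg (by push_cast; omega)]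
          push_cast
          omega
        rw [this]; ring
      have hsum : (∑ j : Fin (k+2), (-1 : ℝ) ^ ((j1 : ℕ) + (j : ℕ)) * A j1 j
            * (A.submatrix j1.succAbove j.succAbove).det)
          = (-1 : ℝ) ^ ((j1 : ℕ) + (j0 : ℕ)) * A j1 j0
              * (A.submatrix j1.succAbove j0.succAbove).det
            + (-1 : ℝ) ^ ((j1 : ℕ) + (j1 : ℕ)) * A j1 j1
              * (A.submatrix j1.succAbove j1.succAbove).det := by
        rw [← Finset.sum_subset (Finset.subset_univ ({j0, j1} : Finset (Fin (k+2))))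
          (fun j _ hj => hzero j hj), Finset.sum_pair hne]
      rw [hsum]
      -- the minor for j1 is the (k+1)-st leading principal submatrix
      have hminor1 : A.submatrix j1.succAbove j1.succAbove
          = M.submatrix (Fin.castLE hk1) (Fin.castLE hk1) := by
        ext i j
        simp [hA, hj1, Fin.succAbove_last, Matrix.submatrix_apply]
      -- compute the determinant of the minor for j0
      have hminor0 : (A.submatrix j1.succAbove j0.succAbove).det
          = M (Fin.castLE hk ⟨k, by omega⟩) (Fin.castLE hk ⟨k+1, by omega⟩)
            * (M.submatrix (Fin.castLE hk0) (Fin.castLE hk0)).det := by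
        set B : Matrix (Fin (k+1)) (Fin (k+1)) ℝ := A.submatrix j1.succAbove j0.succAbove
          with hB
        rw [Matrix.det_succ_column B (Fin.last k)]
        have hBcol : ∀ i : Fin (k+1), B i (Fin.last k)
            = M (Fin.castLE hk ⟨i, by omega⟩) (Fin.castLE hk ⟨k+1, by omega⟩) := by
          intro i
          have h1 : j1.succAbove i = Fin.castSucc i := by
            rw [hj1, Fin.succAbove_last]
          have h2 : j0.succAbove (Fin.last k) = ⟨k+1, by omega⟩ := by
            rw [Fin.succAbove_of_le_castSucc]
            · rfl
            · simp [hj0, Fin.le_def]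
          simp only [hB, Matrix.submatrix_apply, h1, h2, hA]
          rfl
        have hcolzero : ∀ i : Fin (k+1), i ≠ Fin.last k →
            (-1 : ℝ) ^ ((i : ℕ) + ((Fin.last k : Fin (k+1)) : ℕ)) * B i (Fin.last k)
              * (B.submatrix i.succAbove (Fin.last k).succAbove).det = 0 := by
          intro i hi
          have hiv : (i : ℕ) < k := by
            have : (i : ℕ) ≠ k := fun h => hi (Fin.ext h)
            omega
          have : B i (Fin.last k) = 0 := by
            rw [hBcol i]
            apply htri
            simp only [Fin.coe_castLE]
            rw [abs_of_nonpos (by push_cast; omega)]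
            push_cast
            omega
          rw [this]; ring
        rw [Fintype.sum_eq_single (Fin.last k) hcolzero]
        have hBminor : B.submatrix (Fin.last k).succAbove (Fin.last k).succAbove
            = M.submatrix (Fin.castLE hk0) (Fin.castLE hk0) := by
          ext i j
          simp only [Matrix.submatrix_apply, hB, hA, Fin.succAbove_last]
          congr 1
          · apply Fin.ext
            simp [hj1, Fin.succAbove_last]
          · apply Fin.ext
            have h3 : j0.succAbove (Fin.castSucc j) = Fin.castSucc (Fin.castSucc j) := by
              rw [Fin.succAbove_of_castSucc_lt]
              simp [hj0, Fin.lt_def, j.isLt]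
            rw [h3]
            simp
        rw [hBminor, hBcol (Fin.last k)]
        simp only [Fin.val_last]
        rw [show k + k = 2 * k from by omega, pow_mul]
        norm_num
      rw [hminor0, hminor1]
      -- now conclude by arithmetic
      have hAj1j1 : A j1 j1 = M (Fin.castLE hk ⟨k+1, by omega⟩) (Fin.castLE hk ⟨k+1, by omega⟩) := rfl
      have hAj1j0 : A j1 j0 = M (Fin.castLE hk ⟨k+1, by omega⟩) (Fin.castLE hk ⟨k, by omega⟩) := rfl
      have hdpos : 0 < M (Fin.castLE hk ⟨k+1, by omega⟩) (Fin.castLE hk ⟨k+1, by omega⟩) :=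
        hdiag _
      have hprod : M (Fin.castLE hk ⟨k, by omega⟩) (Fin.castLE hk ⟨k+1, by omega⟩)
          * M (Fin.castLE hk ⟨k+1, by omega⟩) (Fin.castLE hk ⟨k, by omega⟩) ≤ 0 :=
        hoff _ _ rfl
      have hs1 : (-1 : ℝ) ^ ((j1 : ℕ) + (j0 : ℕ)) = -1 := by
        simp only [hj1, hj0, Fin.val_last]
        rw [show k + 1 + k = 2 * k + 1 by omega]
        rw [pow_succ, pow_mul]
        norm_num
      have hs2 : (-1 : ℝ) ^ ((j1 : ℕ) + (j1 : ℕ)) = 1 := by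
        simp only [hj1, Fin.val_last]
        rw [show k + 1 + (k + 1) = 2 * (k + 1) by omega]
        rw [pow_mul]
        norm_num
      rw [hs1, hs2, hAj1j1, hAj1j0]
      nlinarith [mul_pos hdpos hD1, mul_nonneg (neg_nonneg.mpr hprod) hD0.le]
end
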